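/- arXiv:2411.14936 — 3 statements merged into one kernel-verified Lean document; each statement's English description precedes it below -/
import Mathlib

section
/- Let ν be a Borel probability measure on a topological space M, and let Q be a Borel probability measure on the space of Borel probability measures on M that is the pushforward under the map (s, x) ↦ Σᵢ sᵢ δ_{xᵢ} of π ⊗ ν^⊗∞, where π is a probability measure on the infinite ordered simplex T = {s : sᵢ ≥ s_{i+1} ≥ 0, Σᵢ sᵢ = 1}. Then for every p ∈ [1,∞) and every f ∈ L^p(ν), the function f* : η ↦ ∫ f dη is well-defined Q-almost everywhere, belongs to L^p(Q), and the map f ↦ f* from L^p(ν) to L^p(Q) is Lipschitz with constant at most 1 (in particular ‖f*‖_{L^p(Q)} ≤ ‖f‖_{L^p(ν)}). -/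
/-!
Averaging `em (s, x) = Σᵢ sᵢ δ_{xᵢ}` over `x ∼ ν^⊗∞` gives `Σᵢ sᵢ ν = ν`, i.e. in the language of
the Giry monad `Q.join = ν`. Everything then follows for any `Q` on probability measures with
`Q.join = ν`: a `ν`-null set is `η`-null for `Q`-a.e. `η`, and integrating Jensen's inequality
`‖∫ f dη‖ ≤ ‖f‖_{L^p(η)}` against `Q` gives `‖f*‖_{L^p(Q)} ≤ ‖f‖_{L^p(Q.join)}`.
-/

open MeasureTheory ENNReal

namespace MeasureTheory

variable {α E : Type*} [MeasurableSpace α] [NormedAddCommGroup E]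

theorem AEStronglyMeasurable.ae_of_join {m : Measure (Measure α)} {f : α → E}
    (hf : AEStronglyMeasurable f m.join) : ∀ᵐ μ ∂m, AEStronglyMeasurable f μ :=
  (Measure.ae_ae_of_ae_join hf.ae_eq_mk).mono fun _ hμ ↦ ⟨_, hf.stronglyMeasurable_mk, hμ⟩

theorem Measure.ae_integrable_of_join {m : Measure (Measure α)} {f : α → E}
    (hf : Integrable f m.join) : ∀ᵐ μ ∂m, Integrable f μ := by
  have hfin : ∀ᵐ μ ∂m, ∫⁻ x, ‖f x‖ₑ ∂μ < ∞ := by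
    refine ae_lt_top' (aemeasurable_lintegral hf.1.enorm) ?_
    rw [← lintegral_join hf.1.enorm]
    exact hf.2.ne
  filter_upwards [hf.1.ae_of_join, hfin] with μ hμ hμfin
  exact ⟨hμ, hμfin⟩

variable [NormedSpace ℝ E]

theorem StronglyMeasurable.integral_measure {f : α → E} (hf : StronglyMeasurable f) :
    StronglyMeasurable fun μ : Measure α ↦ ∫ x, f x ∂μ :=
  hf.integral_kernel (κ := ⟨id, measurable_id⟩)

theorem enorm_integral_le_eLpNorm {μ : Measure α} [IsProbabilityMeasure μ] {p : ℝ≥0∞}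
    (hp : 1 ≤ p) {f : α → E} (hf : AEStronglyMeasurable f μ) :
    ‖∫ x, f x ∂μ‖ₑ ≤ eLpNorm f p μ :=
  calc ‖∫ x, f x ∂μ‖ₑ ≤ ∫⁻ x, ‖f x‖ₑ ∂μ := enorm_integral_le_lintegral_enorm f
    _ = eLpNorm f 1 μ := eLpNorm_one_eq_lintegral_enorm.symm
    _ ≤ eLpNorm f p μ := eLpNorm_le_eLpNorm_of_exponent_le hp hf

namespace Measure

variable {m : Measure (Measure α)} {f g : α → E}

theorem integral_ae_eq_of_ae_eq_join (hfg : f =ᵐ[m.join] g) :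
    (fun μ : Measure α ↦ ∫ x, f x ∂μ) =ᵐ[m] fun μ ↦ ∫ x, g x ∂μ :=
  (ae_ae_of_ae_join hfg).mono fun _ ↦ integral_congr_ae

theorem aestronglyMeasurable_integral_of_join (hf : AEStronglyMeasurable f m.join) :
    AEStronglyMeasurable (fun μ : Measure α ↦ ∫ x, f x ∂μ) m :=
  ⟨_, hf.stronglyMeasurable_mk.integral_measure, integral_ae_eq_of_ae_eq_join hf.ae_eq_mk⟩

theorem integral_sub_ae_eq_of_join (hf : Integrable f m.join) (hg : Integrable g m.join) :
    (fun μ : Measure α ↦ ∫ x, f x ∂μ) - (fun μ ↦ ∫ x, g x ∂μ) =ᵐ[m]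
      fun μ ↦ ∫ x, (f - g) x ∂μ := by
  filter_upwards [ae_integrable_of_join hf, ae_integrable_of_join hg] with μ hμf hμg
  exact (integral_sub hμf hμg).symm

theorem eLpNorm_integral_le_of_join (hm : ∀ᵐ μ ∂m, IsProbabilityMeasure μ) {p : ℝ≥0∞}
    (hp : 1 ≤ p) (hf : AEStronglyMeasurable f m.join) :
    eLpNorm (fun μ : Measure α ↦ ∫ x, f x ∂μ) p m ≤ eLpNorm f p m.join := by
  have hjensen : ∀ᵐ μ ∂m, ‖∫ x, f x ∂μ‖ₑ ≤ eLpNorm f p μ := by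
    filter_upwards [hm, hf.ae_of_join] with μ _ hμ using enorm_integral_le_eLpNorm hp hμ
  by_cases hp_top : p = ∞
  · subst hp_top
    refine eLpNormEssSup_le_of_ae_enorm_bound ?_
    filter_upwards [hjensen, ae_ae_of_ae_join (ae_le_eLpNormEssSup (f := f))] with μ hμ hμsup
    exact hμ.trans (eLpNormEssSup_le_of_ae_enorm_bound hμsup)
  lift p to NNReal using hp_top
  have hp0 : p ≠ 0 := by rintro rfl; simp at hp
  calc eLpNorm (fun μ : Measure α ↦ ∫ x, f x ∂μ) p m
      = (∫⁻ μ, ‖∫ x, f x ∂μ‖ₑ ^ (p : ℝ) ∂m) ^ (1 / (p : ℝ)) := eLpNorm_nnreal_eq_lintegral hp0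
    _ ≤ (∫⁻ μ, eLpNorm f p μ ^ (p : ℝ) ∂m) ^ (1 / (p : ℝ)) := by
      gcongr ?_ ^ _
      exact lintegral_mono_ae (hjensen.mono fun μ hμ ↦ by gcongr)
    _ = (∫⁻ μ, ∫⁻ x, ‖f x‖ₑ ^ (p : ℝ) ∂μ ∂m) ^ (1 / (p : ℝ)) := by
      simp_rw [eLpNorm_nnreal_pow_eq_lintegral hp0]
    _ = eLpNorm f p m.join := by
      rw [← lintegral_join (hf.enorm.pow_const _), eLpNorm_nnreal_eq_lintegral hp0]

end Measure

theorem MemLp.integral_of_join {m : Measure (Measure α)} {f : α → E}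
    (hm : ∀ᵐ μ ∂m, IsProbabilityMeasure μ) {p : ℝ≥0∞} (hp : 1 ≤ p) (hf : MemLp f p m.join) :
    MemLp (fun μ : Measure α ↦ ∫ x, f x ∂μ) p m :=
  ⟨Measure.aestronglyMeasurable_integral_of_join hf.1,
    (Measure.eLpNorm_integral_le_of_join hm hp hf.1).trans_lt hf.2⟩

end MeasureTheory

theorem ENNReal.tsum_ofReal_eq_one {s : ℕ → ℝ} (hs0 : ∀ i, 0 ≤ s i) (hs : ∑' i, s i = 1) :
    ∑' i, ENNReal.ofReal (s i) = 1 := by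
  have hsum : Summable s := by
    by_contra h
    simp [tsum_eq_zero_of_not_summable h] at hs
  rw [← ENNReal.ofReal_tsum_of_nonneg hs0 hsum, hs, ENNReal.ofReal_one]

namespace MeasureTheory.Measure

variable {M : Type*} [MeasurableSpace M]

theorem map_eval_eq_of_forall_cylinder {ν : Measure M} [IsProbabilityMeasure ν]
    {νInf : Measure (ℕ → M)}
    (h : ∀ (n : ℕ) (A : Fin n → Set M), (∀ i, MeasurableSet (A i)) →
      νInf {x | ∀ i : Fin n, x (i : ℕ) ∈ A i} = ∏ i, ν (A i))
    (i : ℕ) : νInf.map (fun x ↦ x i) = ν := by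
  ext A hA
  let B : Fin (i + 1) → Set M := Function.update (fun _ ↦ Set.univ) (Fin.last i) A
  have hB : {x : ℕ → M | ∀ j : Fin (i + 1), x j ∈ B j} = (fun x ↦ x i) ⁻¹' A := by
    ext x
    refine ⟨fun hx ↦ by simpa [B] using hx (Fin.last i), fun hx j ↦ ?_⟩
    rcases eq_or_ne j (Fin.last i) with rfl | hj
    · simpa [B] using hx
    · simp [B, hj]
  rw [map_apply (measurable_pi_apply i) hA, ← hB,
    h _ B fun j ↦ by rcases eq_or_ne j (Fin.last i) with rfl | hj <;> simp [B, *]]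
  simp [B, Fin.prod_univ_castSucc, Fin.castSucc_ne_last]

theorem isProbabilityMeasure_sum_smul_dirac {w : ℕ → ℝ≥0∞} (hw : ∑' i, w i = 1)
    (x : ℕ → M) : IsProbabilityMeasure (sum fun i ↦ w i • dirac (x i)) :=
  ⟨by simp [hw]⟩

theorem ae_isProbabilityMeasure_map {β : Type*} [MeasurableSpace β] {μ : Measure β}
    {em : β → Measure M} (hm : Measurable em) (h : ∀ q, IsProbabilityMeasure (em q)) :
    ∀ᵐ η ∂μ.map em, IsProbabilityMeasure η := by
  have hmeas : MeasurableSet {η : Measure M | IsProbabilityMeasure η} := by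
    simp_rw [isProbabilityMeasure_iff]
    exact measurable_coe MeasurableSet.univ (measurableSet_singleton 1)
  exact (ae_map_iff hm.aemeasurable hmeas).2 (ae_of_all _ h)

theorem join_map_prod_sum_smul_dirac {S : Type*} [MeasurableSpace S] {π : Measure S}
    [IsProbabilityMeasure π] {ν : Measure M} {νInf : Measure (ℕ → M)} [SFinite νInf]
    (hmarg : ∀ i, νInf.map (fun x ↦ x i) = ν) {w : S → ℕ → ℝ≥0∞}
    (hw : ∀ i, Measurable fun s ↦ w s i) (hw1 : ∀ s, ∑' i, w s i = 1)
    {em : S × (ℕ → M) → Measure M}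
    (hem : ∀ q, em q = sum fun i ↦ w q.1 i • dirac (q.2 i)) (hm : Measurable em) :
    ((π.prod νInf).map em).join = ν := by
  ext A hA
  have hemA : ∀ q, em q A = ∑' i, w q.1 i * A.indicator 1 (q.2 i) := by
    intro q
    simp [hem, hA, dirac_apply']
  have hind : ∀ i, Measurable fun x : ℕ → M ↦ A.indicator (1 : M → ℝ≥0∞) (x i) := fun i ↦
    (measurable_one.indicator hA).comp (measurable_pi_apply i)
  have hcoord : ∀ i, ∫⁻ x, A.indicator 1 (x i) ∂νInf = ν A := fun i ↦ by
    rw [← lintegral_map (measurable_one.indicator hA) (measurable_pi_apply i), hmarg,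
      lintegral_indicator_one hA]
  calc ((π.prod νInf).map em).join A
      = ∫⁻ q, em q A ∂(π.prod νInf) := by
        rw [join_apply hA, lintegral_map (measurable_coe hA) hm]
    _ = ∫⁻ s, ∫⁻ x, ∑' i, w s i * A.indicator 1 (x i) ∂νInf ∂π := by
        simp_rw [hemA]
        exact lintegral_prod _ (Measurable.tsum fun i ↦
          ((hw i).comp measurable_fst).mul ((hind i).comp measurable_snd)).aemeasurable
    _ = ∫⁻ s, ∑' i, w s i * ν A ∂π := by
        refine lintegral_congr fun s ↦ ?_
        rw [lintegral_tsum fun i ↦ ((hind i).const_mul _).aemeasurable]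
        simp_rw [lintegral_const_mul _ (hind _), hcoord]
    _ = ν A := by simp [ENNReal.tsum_mul_right, hw1]

end MeasureTheory.Measure

theorem stmt0_general {M : Type*} [MeasurableSpace M]
    (ν : Measure M) [IsProbabilityMeasure ν]
    -- the infinite product measure `ν^⊗∞`, characterized by its finite-dimensional marginals
    (νInf : Measure (ℕ → M)) [IsProbabilityMeasure νInf]
    (hνInf : ∀ (n : ℕ) (A : Fin n → Set M), (∀ i, MeasurableSet (A i)) →
      νInf {x | ∀ i : Fin n, x (i : ℕ) ∈ A i} = ∏ i, ν (A i))
    -- the infinite ordered simplex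
    (T : Set (ℕ → ℝ))
    (hT : T = {s | (∀ i, s (i + 1) ≤ s i) ∧ (∀ i, 0 ≤ s i) ∧ ∑' i, s i = 1})
    (π : Measure T) [IsProbabilityMeasure π]
    -- the measure representation map `em`
    (em : T × (ℕ → M) → Measure M)
    (hem : ∀ p, em p =
      Measure.sum fun i => (ENNReal.ofReal ((p.1 : ℕ → ℝ) i)) • Measure.dirac (p.2 i))
    (hm : Measurable em)
    (Q : Measure (Measure M))
    (hQ : Q = (π.prod νInf).map em)
    (p : ℝ≥0∞) (hp : 1 ≤ p) :
    -- well-definedness `Q`-a.e.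
    (∀ f g : M → ℝ, f =ᵐ[ν] g →
      (fun η : Measure M => ∫ x, f x ∂η) =ᵐ[Q] fun η : Measure M => ∫ x, g x ∂η) ∧
    -- membership in `L^p(Q)`
    (∀ f : M → ℝ, MemLp f p ν → MemLp (fun η : Measure M => ∫ x, f x ∂η) p Q) ∧
    -- norm contraction
    (∀ f : M → ℝ, MemLp f p ν →
      eLpNorm (fun η : Measure M => ∫ x, f x ∂η) p Q ≤ eLpNorm f p ν) ∧
    -- `1`-Lipschitz property of `f ↦ f*`
    (∀ f g : M → ℝ, MemLp f p ν → MemLp g p ν →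
      eLpNorm ((fun η : Measure M => ∫ x, f x ∂η) - fun η : Measure M => ∫ x, g x ∂η) p Q ≤
        eLpNorm (f - g) p ν) := by
  have hw1 : ∀ s : T, ∑' i, ENNReal.ofReal ((s : ℕ → ℝ) i) = 1 := fun s ↦ by
    obtain ⟨-, hs0, hs1⟩ : (s : ℕ → ℝ) ∈ {s : ℕ → ℝ |
        (∀ i, s (i + 1) ≤ s i) ∧ (∀ i, 0 ≤ s i) ∧ ∑' i, s i = 1} := hT ▸ s.2
    exact ENNReal.tsum_ofReal_eq_one hs0 hs1
  have hw : ∀ i, Measurable fun s : T ↦ ENNReal.ofReal ((s : ℕ → ℝ) i) := fun i ↦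
    ((measurable_pi_apply i).comp measurable_subtype_coe).ennreal_ofReal
  have hjoin : Q.join = ν := hQ ▸ Measure.join_map_prod_sum_smul_dirac
    (Measure.map_eval_eq_of_forall_cylinder hνInf) hw hw1 hem hm
  have hprob : ∀ᵐ η ∂Q, IsProbabilityMeasure η := hQ ▸ Measure.ae_isProbabilityMeasure_map hm
    fun q ↦ hem q ▸ Measure.isProbabilityMeasure_sum_smul_dirac (hw1 q.1) q.2
  subst hjoin
  refine ⟨fun f g ↦ Measure.integral_ae_eq_of_ae_eq_join,
    fun f hf ↦ hf.integral_of_join hprob hp,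
    fun f hf ↦ Measure.eLpNorm_integral_le_of_join hprob hp hf.1, fun f g hf hg ↦ ?_⟩
  rw [eLpNorm_congr_ae (Measure.integral_sub_ae_eq_of_join (hf.integrable hp) (hg.integrable hp))]
  exact Measure.eLpNorm_integral_le_of_join hprob hp (hf.1.sub hg.1)

/-- Let `ν` be a Borel probability measure on `M` and let `Q` be the
pushforward, under `em : (s, x) ↦ Σᵢ sᵢ δ_{xᵢ}`, of `π ⊗ ν^⊗∞`, where `π` is a probability
measure on the infinite ordered simplex `T`.  Then for every `p ∈ [1,∞)` and every
`f ∈ L^p(ν)`, the function `f* : η ↦ ∫ f dη` is well defined `Q`-a.e. (independent of the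
`ν`-representative of `f`), belongs to `L^p(Q)`, satisfies `‖f*‖_{L^p(Q)} ≤ ‖f‖_{L^p(ν)}`,
and `f ↦ f*` is `1`-Lipschitz from `L^p(ν)` to `L^p(Q)`. -/
theorem stmt0 {M : Type*} [MeasurableSpace M]
    (ν : Measure M) [IsProbabilityMeasure ν]
    -- the infinite product measure `ν^⊗∞`, characterized by its finite-dimensional marginals
    (νInf : Measure (ℕ → M)) [IsProbabilityMeasure νInf]
    (hνInf : ∀ (n : ℕ) (A : Fin n → Set M), (∀ i, MeasurableSet (A i)) →
      νInf {x | ∀ i : Fin n, x (i : ℕ) ∈ A i} = ∏ i, ν (A i))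
    -- the infinite ordered simplex
    (T : Set (ℕ → ℝ))
    (hT : T = {s | (∀ i, s (i + 1) ≤ s i) ∧ (∀ i, 0 ≤ s i) ∧ ∑' i, s i = 1})
    (π : Measure T) [IsProbabilityMeasure π]
    -- the measure representation map `em`
    (em : T × (ℕ → M) → Measure M)
    (hem : ∀ p, em p =
      Measure.sum fun i => (ENNReal.ofReal ((p.1 : ℕ → ℝ) i)) • Measure.dirac (p.2 i))
    (hm : Measurable em)
    (Q : Measure (Measure M))
    (hQ : Q = (π.prod νInf).map em)
    (p : ℝ≥0∞) (hp : 1 ≤ p) (hp' : p ≠ ∞) :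
    -- well-definedness `Q`-a.e.
    (∀ f g : M → ℝ, f =ᵐ[ν] g →
      (fun η : Measure M => ∫ x, f x ∂η) =ᵐ[Q] fun η : Measure M => ∫ x, g x ∂η) ∧
    -- membership in `L^p(Q)`
    (∀ f : M → ℝ, MemLp f p ν → MemLp (fun η : Measure M => ∫ x, f x ∂η) p Q) ∧
    -- norm contraction
    (∀ f : M → ℝ, MemLp f p ν →
      eLpNorm (fun η : Measure M => ∫ x, f x ∂η) p Q ≤ eLpNorm f p ν) ∧
    -- `1`-Lipschitz property of `f ↦ f*`
    (∀ f g : M → ℝ, MemLp f p ν → MemLp g p ν →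
      eLpNorm ((fun η : Measure M => ∫ x, f x ∂η) - fun η : Measure M => ∫ x, g x ∂η) p Q ≤
        eLpNorm (f - g) p ν) :=
  stmt0_general ν νInf hνInf T hT π em hem hm Q hQ p hp
end

section
/- Let s = (sᵢ)ᵢ be a nonincreasing sequence of strictly positive reals with Σᵢ sᵢ = 1, and let λ > 0. Then for every t > 0 the series Σ_{k=1}^∞ exp(−2λt/s_k) converges. -/
/-- Let `s = (sᵢ)ᵢ` be a nonincreasing sequence of strictly positive reals
with `Σᵢ sᵢ = 1`, and let `λ > 0`.  Then for every `t > 0` the series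
`Σ_{k} exp(−2λt/s_k)` converges. -/
theorem stmt5 (s : ℕ → ℝ) (hmono : ∀ i, s (i + 1) ≤ s i) (hpos : ∀ i, 0 < s i)
    (hsum : ∑' i, s i = 1) (hsummable : Summable s)
    (lam : ℝ) (hlam : 0 < lam) (t : ℝ) (ht : 0 < t) :
    Summable fun k : ℕ => Real.exp (-(2 * lam * t) / s k) := by
  have hc : 0 < 2 * lam * t := by positivity
  have hg : Summable fun k => s k / (2 * lam * t) := hsummable.div_const _
  have hle : ∀ k, Real.exp (-(2 * lam * t) / s k) ≤ s k / (2 * lam * t) := by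
    intro k
    have hx : 0 < (2 * lam * t) / s k := div_pos hc (hpos k)
    have h1 : (2 * lam * t) / s k ≤ Real.exp ((2 * lam * t) / s k) :=
      (Real.add_one_le_exp _).trans' (by linarith)
    have heq : Real.exp (-(2 * lam * t) / s k) = (Real.exp ((2 * lam * t) / s k))⁻¹ := by
      rw [← Real.exp_neg, neg_div]
    rw [heq]
    calc (Real.exp ((2 * lam * t) / s k))⁻¹ ≤ ((2 * lam * t) / s k)⁻¹ :=
          inv_anti₀ hx h1
      _ = s k / (2 * lam * t) := by rw [inv_div]
  exact Summable.of_nonneg_of_le (fun k => (Real.exp_pos _).le) hle hg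
end

section
/- Let (E¹, D(E¹)) and (E², D(E²)) be Dirichlet forms on L²(ν₁), L²(ν₂) respectively (ν₁, ν₂ probability measures), and let (E, D(E)) be the product Dirichlet form on L²(ν₁ ⊗ ν₂). For capacitable sets Aᵢ ⊆ Mᵢ and quasi-open sets Uᵢ ⊇ Aᵢ, the relative capacities satisfy Cap_E(A₁ × A₂, U₁ × U₂) ≤ Cap_{E¹}(A₁, U₁)·‖e₂‖²_{L²(ν₂)} + Cap_{E²}(A₂, U₂)·‖e₁‖²_{L²(ν₁)}, where eᵢ is the equilibrium potential of the pair (Aᵢ, Uᵢ). -/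
open MeasureTheory

/-- The admissible class for the relative (condenser) `1`-capacity of the pair `(A, U)`:
elements of the domain `D` of the part form on `U` (i.e. vanishing a.e. off `U`) which are
`≥ 1` on `A` and take values in `[0,1]`. -/
def admissible {X : Type*} [MeasurableSpace X] (m : Measure X) (D : Set (X → ℝ))
    (A U : Set X) : Set (X → ℝ) :=
  {u | u ∈ D ∧ (∀ᵐ x ∂m, x ∉ U → u x = 0) ∧ (∀ᵐ x ∂m, x ∈ A → 1 ≤ u x) ∧
    (∀ᵐ x ∂m, 0 ≤ u x ∧ u x ≤ 1)}

/-- The relative `1`-capacity `Cap(A, U) = inf { E(u) + ‖u‖²_{L²(m)} : u admissible }`. -/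
noncomputable def relCap {X : Type*} [MeasurableSpace X] (m : Measure X) (D : Set (X → ℝ))
    (E : (X → ℝ) → ℝ) (A U : Set X) : ℝ :=
  sInf {r : ℝ | ∃ u ∈ admissible m D A U, r = E u + ∫ x, (u x) ^ 2 ∂m}

/-- Let `(E¹, D¹)`, `(E², D²)` be Dirichlet forms on `L²(ν₁)`, `L²(ν₂)`
(probability measures), and `(E, D)` the product Dirichlet form on `L²(ν₁ ⊗ ν₂)`.  For sets
`Aᵢ ⊆ Uᵢ` the relative capacities satisfy
`Cap_E(A₁ × A₂, U₁ × U₂) ≤ Cap_{E¹}(A₁,U₁)·‖e₂‖² + Cap_{E²}(A₂,U₂)·‖e₁‖²`,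
where `eᵢ` is the equilibrium potential of `(Aᵢ, Uᵢ)`. -/
theorem stmt7 {M₁ M₂ : Type*} [MeasurableSpace M₁] [MeasurableSpace M₂]
    (ν₁ : Measure M₁) [IsProbabilityMeasure ν₁]
    (ν₂ : Measure M₂) [IsProbabilityMeasure ν₂]
    (D₁ : Set (M₁ → ℝ)) (E₁ : (M₁ → ℝ) → ℝ)
    (D₂ : Set (M₂ → ℝ)) (E₂ : (M₂ → ℝ) → ℝ)
    (hE₁ : ∀ u ∈ D₁, 0 ≤ E₁ u) (hE₂ : ∀ u ∈ D₂, 0 ≤ E₂ u)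
    (D : Set (M₁ × M₂ → ℝ)) (E : (M₁ × M₂ → ℝ) → ℝ)
    (hE : ∀ u ∈ D, 0 ≤ E u)
    -- the product form contains elementary tensors, and acts on them in product form
    (htensor_mem : ∀ u₁ ∈ D₁, ∀ u₂ ∈ D₂, (fun z : M₁ × M₂ => u₁ z.1 * u₂ z.2) ∈ D)
    (htensor_val : ∀ u₁ ∈ D₁, ∀ u₂ ∈ D₂,
      E (fun z : M₁ × M₂ => u₁ z.1 * u₂ z.2) =
        E₁ u₁ * ∫ x, (u₂ x) ^ 2 ∂ν₂ + E₂ u₂ * ∫ x, (u₁ x) ^ 2 ∂ν₁)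
    (A₁ U₁ : Set M₁) (A₂ U₂ : Set M₂) (hA₁ : A₁ ⊆ U₁) (hA₂ : A₂ ⊆ U₂)
    -- the equilibrium potentials: admissible minimizers for the relative capacities
    (e₁ : M₁ → ℝ) (he₁ : e₁ ∈ admissible ν₁ D₁ A₁ U₁)
    (he₁min : E₁ e₁ + ∫ x, (e₁ x) ^ 2 ∂ν₁ = relCap ν₁ D₁ E₁ A₁ U₁)
    (e₂ : M₂ → ℝ) (he₂ : e₂ ∈ admissible ν₂ D₂ A₂ U₂)
    (he₂min : E₂ e₂ + ∫ x, (e₂ x) ^ 2 ∂ν₂ = relCap ν₂ D₂ E₂ A₂ U₂) :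
    relCap (ν₁.prod ν₂) D E (A₁ ×ˢ A₂) (U₁ ×ˢ U₂) ≤
      relCap ν₁ D₁ E₁ A₁ U₁ * ∫ x, (e₂ x) ^ 2 ∂ν₂ +
        relCap ν₂ D₂ E₂ A₂ U₂ * ∫ x, (e₁ x) ^ 2 ∂ν₁ := by
  obtain ⟨h₁D, h₁U, h₁A, h₁01⟩ := he₁
  obtain ⟨h₂D, h₂U, h₂A, h₂01⟩ := he₂
  set u : M₁ × M₂ → ℝ := fun z => e₁ z.1 * e₂ z.2 with hu
  have hfst := (Measure.quasiMeasurePreserving_fst (μ := ν₁) (ν := ν₂)).tendsto_ae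
  have hsnd := (Measure.quasiMeasurePreserving_snd (μ := ν₁) (ν := ν₂)).tendsto_ae
  have huD : u ∈ D := htensor_mem e₁ h₁D e₂ h₂D
  -- u is admissible
  have hadm : u ∈ admissible (ν₁.prod ν₂) D (A₁ ×ˢ A₂) (U₁ ×ˢ U₂) := by
    refine ⟨huD, ?_, ?_, ?_⟩
    · filter_upwards [hfst.eventually h₁U, hsnd.eventually h₂U] with z hz1 hz2 hzU
      rw [Set.mem_prod] at hzU
      push_neg at hzU
      by_cases h : z.1 ∈ U₁
      · simp [hu, hz2 (hzU h)]
      · simp [hu, hz1 h]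
    · filter_upwards [hfst.eventually h₁A, hsnd.eventually h₂A] with z hz1 hz2 hzA
      have := mul_le_mul (hz1 hzA.1) (hz2 hzA.2) zero_le_one
        (le_trans zero_le_one (hz1 hzA.1))
      simpa [hu] using this
    · filter_upwards [hfst.eventually h₁01, hsnd.eventually h₂01] with z hz1 hz2
      exact ⟨mul_nonneg hz1.1 hz2.1,
        mul_le_one₀ hz1.2 hz2.1 hz2.2⟩
  -- value of the tensor
  have hint : ∫ z, (u z) ^ 2 ∂(ν₁.prod ν₂) = (∫ x, (e₁ x) ^ 2 ∂ν₁) * ∫ x, (e₂ x) ^ 2 ∂ν₂ := by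
    have : ∫ z, (u z) ^ 2 ∂(ν₁.prod ν₂)
        = ∫ z : M₁ × M₂, (e₁ z.1) ^ 2 * (e₂ z.2) ^ 2 ∂(ν₁.prod ν₂) := by
      congr 1; funext z; simp [hu]; ring
    rw [this]
    exact integral_prod_mul (f := fun x => (e₁ x)^2) (g := fun x => (e₂ x)^2)
  have hval : E u + ∫ z, (u z) ^ 2 ∂(ν₁.prod ν₂)
      = E₁ e₁ * ∫ x, (e₂ x) ^ 2 ∂ν₂ + E₂ e₂ * ∫ x, (e₁ x) ^ 2 ∂ν₁
        + (∫ x, (e₁ x) ^ 2 ∂ν₁) * ∫ x, (e₂ x) ^ 2 ∂ν₂ := by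
    rw [htensor_val e₁ h₁D e₂ h₂D, hint]
  -- sInf ≤ value of u
  have hmem : (E u + ∫ z, (u z) ^ 2 ∂(ν₁.prod ν₂)) ∈
      {r : ℝ | ∃ v ∈ admissible (ν₁.prod ν₂) D (A₁ ×ˢ A₂) (U₁ ×ˢ U₂),
        r = E v + ∫ z, (v z) ^ 2 ∂(ν₁.prod ν₂)} := ⟨u, hadm, rfl⟩
  have hbdd : BddBelow {r : ℝ | ∃ v ∈ admissible (ν₁.prod ν₂) D (A₁ ×ˢ A₂) (U₁ ×ˢ U₂),
      r = E v + ∫ z, (v z) ^ 2 ∂(ν₁.prod ν₂)} := by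
    refine ⟨0, fun r hr => ?_⟩
    obtain ⟨v, hv, rfl⟩ := hr
    have h1 : 0 ≤ E v := hE v hv.1
    have h2 : 0 ≤ ∫ z, (v z) ^ 2 ∂(ν₁.prod ν₂) := integral_nonneg fun z => sq_nonneg _
    linarith
  have hle : relCap (ν₁.prod ν₂) D E (A₁ ×ˢ A₂) (U₁ ×ˢ U₂)
      ≤ E u + ∫ z, (u z) ^ 2 ∂(ν₁.prod ν₂) := csInf_le hbdd hmem
  have hI₁ : 0 ≤ ∫ x, (e₁ x) ^ 2 ∂ν₁ := integral_nonneg fun x => sq_nonneg _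
  have hI₂ : 0 ≤ ∫ x, (e₂ x) ^ 2 ∂ν₂ := integral_nonneg fun x => sq_nonneg _
  rw [← he₁min, ← he₂min]
  have := mul_nonneg hI₁ hI₂
  nlinarith [hle, hval]
end
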